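/- Let S = {a_1, ..., a_n} be a multiset of nonnegative integers (n >= 2) with at least two of the a_i positive, and suppose S is balanced. Then there exist nonnegative integers t_1, ..., t_n with t_i >= a_i for all i such that the nim-sum of t_1, ..., t_n equals the nim-sum of (t_1 - a_1), ..., (t_n - a_n). -/

import Mathlib

/-!
Write `a i = 2^k * b i`. Balance says `∑ b i` is even, and maximality of `k` gives an index `p`
with `b p` odd, so `b p` and `V = ∑_{i ≠ p} b i` are both odd. Taking `t i = x i + a i`, the
claim is that `⨁ (x i ⊕ (x i + a i)) = 0`. Chaining `x_{i+1} = x_i + a_i` through the indices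
`i ≠ p` telescopes their contribution to `y ⊕ (y + V)`, and for odd `u < 2^m` the choice
`x = (2^m - 1 - u) / 2` gives `x + (x + u) = 2^m - 1`, a sum without carries, so
`x ⊕ (x + u) = 2^m - 1`. Doing this for `u = b p` and `u = V` makes the two contributions cancel;
scaling by `2^k` preserves nim-sums.
-/

/-- The nim-sum (bitwise XOR) of a list of naturals. -/
def nimSum (l : List ℕ) : ℕ := l.foldr (· ^^^ ·) 0

lemma nimSum_cons (c : ℕ) (l : List ℕ) : nimSum (c :: l) = c ^^^ nimSum l := rfl

lemma nimSum_mod_two : ∀ l : List ℕ, nimSum l % 2 = l.sum % 2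
  | [] => rfl
  | c :: l => by
    rw [nimSum_cons, List.sum_cons, Nat.xor_mod_two_eq, Nat.add_mod, nimSum_mod_two l,
      ← Nat.add_mod]

lemma nimSum_ofFn_xor {n : ℕ} (f g : Fin n → ℕ) :
    nimSum (List.ofFn fun i => f i ^^^ g i) = nimSum (List.ofFn f) ^^^ nimSum (List.ofFn g) := by
  induction n with
  | zero => simp [nimSum]
  | succ n ih =>
    simp only [List.ofFn_succ, nimSum_cons, ih]
    ac_rfl

lemma two_pow_mul_xor (k u w : ℕ) : 2 ^ k * u ^^^ 2 ^ k * w = 2 ^ k * (u ^^^ w) := by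
  simp only [Nat.mul_comm (2 ^ k), ← Nat.shiftLeft_eq, Nat.shiftLeft_xor_distrib]

lemma nimSum_ofFn_two_pow_mul {n : ℕ} (k : ℕ) (f : Fin n → ℕ) :
    nimSum (List.ofFn fun i => 2 ^ k * f i) = 2 ^ k * nimSum (List.ofFn f) := by
  induction n with
  | zero => rfl
  | succ n ih => simp only [List.ofFn_succ, nimSum_cons, ih, two_pow_mul_xor]

lemma nimSum_ofFn_succAbove {n : ℕ} (f : Fin (n + 1) → ℕ) (p : Fin (n + 1)) :
    nimSum (List.ofFn f) = f p ^^^ nimSum (List.ofFn fun i => f (p.succAbove i)) := by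
  induction n with
  | zero => fin_cases p; rfl
  | succ n ih =>
    cases p using Fin.cases with
    | zero => simp only [List.ofFn_succ, nimSum_cons, Fin.succAbove_zero]
    | succ p =>
      rw [List.ofFn_succ, nimSum_cons, ih (fun i => f i.succ) p, List.ofFn_succ (n := n),
        nimSum_cons]
      simp only [Fin.succ_succAbove_zero, Fin.succ_succAbove_succ, Nat.xor_left_comm]

lemma exists_nimSum_xor_add_eq {n : ℕ} (a : Fin n → ℕ) (y : ℕ) :
    ∃ x : Fin n → ℕ, nimSum (List.ofFn fun i => x i ^^^ (x i + a i)) = y ^^^ (y + ∑ i, a i) := by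
  induction n generalizing y with
  | zero => exact ⟨Fin.elim0, by simp [nimSum]⟩
  | succ n ih =>
    obtain ⟨x, hx⟩ := ih (fun i => a i.succ) (y + a 0)
    refine ⟨Fin.cons y x, ?_⟩
    rw [List.ofFn_succ, nimSum_cons, Fin.sum_univ_succ]
    simp only [Fin.cons_zero, Fin.cons_succ]
    rw [hx, ← Nat.add_assoc, Nat.xor_assoc, Nat.xor_xor_cancel_left]

lemma xor_two_pow_sub_succ {u m : ℕ} (h : u < 2 ^ m) : u ^^^ (2 ^ m - (u + 1)) = 2 ^ m - 1 := by
  apply Nat.eq_of_testBit_eq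
  intro i
  rw [Nat.testBit_xor, Nat.testBit_two_pow_sub_succ h, Nat.testBit_two_pow_sub_one]
  by_cases hi : i < m
  · simp [hi]
  · simp [hi, Nat.testBit_lt_two_pow (h.trans_le (Nat.pow_le_pow_right two_pos (not_lt.mp hi)))]

lemma exists_xor_add_eq_two_pow_sub_one {u m : ℕ} (hu : u % 2 = 1) (h : u < 2 ^ m) :
    ∃ x, x ^^^ (x + u) = 2 ^ m - 1 := by
  have hm : 2 ^ m % 2 = 0 := by
    cases m with
    | zero => omega
    | succ m => simp [Nat.pow_succ]
  refine ⟨(2 ^ m - 1 - u) / 2, ?_⟩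
  rw [show (2 ^ m - 1 - u) / 2 + u = 2 ^ m - ((2 ^ m - 1 - u) / 2 + 1) by omega]
  exact xor_two_pow_sub_succ (by omega)

lemma exists_nimSum_xor_add_eq_zero {n : ℕ} (a : Fin n → ℕ) (p : Fin n) (hp : a p % 2 = 1)
    (hsum : (∑ i, a i) % 2 = 0) :
    ∃ x : Fin n → ℕ, nimSum (List.ofFn fun i => x i ^^^ (x i + a i)) = 0 := by
  obtain ⟨n, rfl⟩ : ∃ m, n = m + 1 := Nat.exists_eq_add_one.mpr p.pos
  set V := ∑ i, a (p.succAbove i)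
  have hsplit : ∑ i, a i = a p + V := Fin.sum_univ_succAbove a p
  have hV : V % 2 = 1 := by omega
  set m := a p + V
  obtain ⟨X, hX⟩ := exists_xor_add_eq_two_pow_sub_one hp
    ((Nat.le_add_right _ V).trans_lt m.lt_two_pow_self)
  obtain ⟨y, hy⟩ := exists_xor_add_eq_two_pow_sub_one hV
    ((Nat.le_add_left V _).trans_lt m.lt_two_pow_self)
  obtain ⟨x, hx⟩ := exists_nimSum_xor_add_eq (fun i => a (p.succAbove i)) y
  refine ⟨p.insertNth X x, ?_⟩
  rw [nimSum_ofFn_succAbove _ p]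
  simp only [Fin.insertNth_apply_same, Fin.insertNth_apply_succAbove]
  rw [hx, hX, hy, Nat.xor_self]

theorem stmt6_general (n : ℕ) (a : Fin n → ℕ)
    (k : ℕ) (hk : ∀ i, 2 ^ k ∣ a i) (hkmax : ¬ ∀ i, 2 ^ (k + 1) ∣ a i)
    (hbal : (nimSum (List.ofFn a)).testBit k = false) :
    ∃ t : Fin n → ℕ, (∀ i, a i ≤ t i) ∧
      nimSum (List.ofFn t) = nimSum (List.ofFn fun i => t i - a i) := by
  choose b hb using hk
  obtain ⟨p, hp⟩ := not_forall.mp hkmax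
  have hbp : b p % 2 = 1 := by
    by_contra h
    exact hp ⟨b p / 2, by rw [hb p, Nat.pow_succ, Nat.mul_assoc]; congr 1; omega⟩
  have hbsum : (∑ i, b i) % 2 = 0 := by
    have ha : a = fun i => 2 ^ k * b i := funext hb
    rw [ha, nimSum_ofFn_two_pow_mul, Nat.testBit_two_pow_mul, Nat.sub_self, Nat.testBit_zero,
      nimSum_mod_two, List.sum_ofFn] at hbal
    simpa using hbal
  obtain ⟨x, hx⟩ := exists_nimSum_xor_add_eq_zero b p hbp hbsum
  refine ⟨fun i => 2 ^ k * x i + a i, fun i => Nat.le_add_left _ _, ?_⟩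
  have hscaled : nimSum (List.ofFn fun i => 2 ^ k * x i ^^^ (2 ^ k * x i + a i)) = 0 := by
    simp only [hb, ← Nat.mul_add, two_pow_mul_xor, nimSum_ofFn_two_pow_mul, hx, Nat.mul_zero]
  rw [nimSum_ofFn_xor, Nat.xor_eq_zero_iff] at hscaled
  simpa only [Nat.add_sub_cancel] using hscaled.symm

theorem stmt6 (n : ℕ) (hn : 2 ≤ n) (a : Fin n → ℕ)
    (hpos : ∃ i j, i ≠ j ∧ 0 < a i ∧ 0 < a j)
    (k : ℕ) (hk : ∀ i, 2 ^ k ∣ a i) (hkmax : ¬ ∀ i, 2 ^ (k + 1) ∣ a i)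
    (hbal : (nimSum (List.ofFn a)).testBit k = false) :
    ∃ t : Fin n → ℕ, (∀ i, a i ≤ t i) ∧
      nimSum (List.ofFn t) = nimSum (List.ofFn fun i => t i - a i) :=
  stmt6_general n a k hk hkmax hbal
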